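/- Let g : B → ℝ on the bonds of the triangular lattice satisfy |g_b| ≤ K Σ_{i=1}^N (1 + dist(b, x_i))^{−3} for points x₁, …, x_N ∈ ℝ². Then for any v with Dv ∈ ℓ²(B) and Dv supported on bonds at distance ≥ r from every x_i, |Σ_b g_b Dv_b| ≤ C K N r^{−2} ‖Dv‖_{ℓ²}, where C is a universal constant. -/

import Mathlib

/-!
By Cauchy–Schwarz in `ℓ²(Bonds)` it suffices to bound `∑_b g_b²` over the support of `Dv` by
`C K² N² r⁻⁴`, and since `(∑ᵢ aᵢ)² ≤ N ∑ᵢ aᵢ²` this reduces to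
`∑_{|b₁ - x| ≥ r} (1 + |b₁ - x|)⁻⁶ ≲ r⁻⁴` for a single point `x`. A bond is a lattice site plus one
of finitely many steps, and in lattice coordinates `z ∈ ℤ²` the distance from a site to `x` is
comparable to the `ℓ¹` distance `k` from `z` to a fixed centre. The `ℓ¹` sphere of radius `k`
has `O(k)` points, so the sum is `≲ ∑_{k + 1 ≥ r} (k + 1)⁻⁵`, which telescopes against
`4 / (k + 1)⁴` to at most `4 r⁻⁴`.
-/
noncomputable section
open Real Metric

abbrev E2 := EuclideanSpace ℝ (Fin 2)

def la1 : E2 := WithLp.toLp 2 ![1, 0]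
def la2 : E2 := WithLp.toLp 2 ![1/2, Real.sqrt 3 / 2]

def TriLat : Set E2 :=
  {x | ∃ m n : ℤ, x = (3 : ℝ)⁻¹ • (la1 + la2) + m • la1 + n • la2}

def Bonds : Set (E2 × E2) :=
  {p | p.1 ∈ TriLat ∧ p.2 ∈ TriLat ∧ ‖p.2 - p.1‖ = 1}

theorem summable_and_tsum_le_of_le_sub_succ {a b : ℕ → ℝ} (ha : ∀ k, 0 ≤ a k)
    (hb : ∀ k, 0 ≤ b k) (hab : ∀ k, a k ≤ b k - b (k + 1)) :
    Summable a ∧ ∑' k, a k ≤ b 0 := by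
  have hpartial (n : ℕ) : ∑ k ∈ Finset.range n, a k ≤ b 0 :=
    calc ∑ k ∈ Finset.range n, a k ≤ ∑ k ∈ Finset.range n, (b k - b (k + 1)) :=
          Finset.sum_le_sum fun k _ => hab k
      _ = b 0 - b n := Finset.sum_range_sub' b n
      _ ≤ b 0 := sub_le_self _ (hb n)
  have hs : Summable a := summable_of_sum_range_le ha hpartial
  exact ⟨hs, hs.tsum_le_of_sum_range_le hpartial⟩

theorem inv_pow_five_le_sub {t : ℝ} (ht : 1 ≤ t) : (t ^ 5)⁻¹ ≤ 4 / t ^ 4 - 4 / (t + 1) ^ 4 := by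
  have ht0 : 0 < t := by linarith
  rw [← sub_nonneg]
  have hnum : 0 ≤ (4 * t - 1) * (t + 1) ^ 4 - 4 * t ^ 5 := by
    nlinarith [pow_pos ht0 3, pow_pos ht0 4, mul_nonneg (pow_pos ht0 3).le (sub_nonneg.mpr ht)]
  have hrw : 4 / t ^ 4 - 4 / (t + 1) ^ 4 - (t ^ 5)⁻¹
      = ((4 * t - 1) * (t + 1) ^ 4 - 4 * t ^ 5) / (t ^ 5 * (t + 1) ^ 4) := by
    field_simp
    ring
  rw [hrw]
  positivity

theorem summable_and_tsum_tail_inv_pow_five_le {R : ℝ} (hR : 0 < R) :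
    Summable (fun k : ℕ => if R ≤ k + 1 then (((k : ℝ) + 1) ^ 5)⁻¹ else 0) ∧
      ∑' k : ℕ, (if R ≤ k + 1 then (((k : ℝ) + 1) ^ 5)⁻¹ else 0) ≤ 4 / R ^ 4 := by
  have hab (k : ℕ) : (if R ≤ k + 1 then (((k : ℝ) + 1) ^ 5)⁻¹ else 0) ≤
      4 / max R ((k : ℝ) + 1) ^ 4 - 4 / max R (((k + 1 : ℕ) : ℝ) + 1) ^ 4 := by
    have hk : (0 : ℝ) ≤ k := k.cast_nonneg
    push_cast
    split_ifs with h
    · rw [max_eq_right h, max_eq_right (by linarith)]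
      exact inv_pow_five_le_sub (by linarith)
    · rw [max_eq_left (by linarith), sub_nonneg]
      gcongr
      exact le_max_left _ _
  obtain ⟨hs, hle⟩ := summable_and_tsum_le_of_le_sub_succ (fun k => by split_ifs <;> positivity)
    (fun k => by positivity) hab
  refine ⟨hs, hle.trans ?_⟩
  rw [Nat.cast_zero, zero_add]
  gcongr
  exact le_max_left _ _

theorem summable_and_tsum_le_of_nonneg_of_le {ι : Type*} {f g : ι → ℝ} (hf : ∀ i, 0 ≤ f i)
    (hfg : ∀ i, f i ≤ g i) (hg : Summable g) : Summable f ∧ ∑' i, f i ≤ ∑' i, g i :=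
  have hsf : Summable f := .of_nonneg_of_le hf hfg hg
  ⟨hsf, hsf.tsum_le_tsum hfg hg⟩

theorem summable_and_tsum_comp_fst_le_of_injective {α β γ : Type*} [Fintype γ] {ι : α → β × γ}
    (hι : Function.Injective ι) {φ : β → ℝ} (hφ : ∀ b, 0 ≤ φ b) (hs : Summable φ) :
    Summable (fun a => φ (ι a).1) ∧ ∑' a, φ (ι a).1 ≤ Fintype.card γ * ∑' b, φ b := by
  have hnorm : Summable fun b => ‖φ b‖ := by simpa [Real.norm_eq_abs, abs_of_nonneg (hφ _)] using hs
  have hone : Summable fun _ : γ => ‖(1 : ℝ)‖ := .of_finite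
  have hprod : Summable fun p : β × γ => φ p.1 := by
    simpa using summable_mul_of_summable_norm hnorm hone
  have htsum : ∑' p : β × γ, φ p.1 = Fintype.card γ * ∑' b, φ b := by
    have := tsum_mul_tsum_of_summable_norm hnorm hone
    simp only [mul_one, tsum_fintype, Finset.sum_const, Finset.card_univ, nsmul_eq_mul] at this
    rw [← this, mul_comm]
  have hsa : Summable fun a => φ (ι a).1 := hprod.comp_injective hι
  refine ⟨hsa, ?_⟩
  rw [← htsum]
  exact Summable.tsum_le_tsum_of_inj ι hι (fun p _ => hφ p.1) (fun _ => le_rfl) hsa hprod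

theorem abs_tsum_mul_le_sqrt_mul_sqrt {ι : Type*} {f g : ι → ℝ} (hf : Summable fun i => f i ^ 2)
    (hg : Summable fun i => g i ^ 2) :
    |∑' i, f i * g i| ≤ Real.sqrt (∑' i, f i ^ 2) * Real.sqrt (∑' i, g i ^ 2) := by
  have hrpow (h : ι → ℝ) : (fun i => |h i| ^ (2 : ℝ)) = fun i => h i ^ 2 := by
    funext i
    rw [Real.rpow_two, sq_abs]
  obtain ⟨hsum, hle⟩ := Real.summable_and_inner_le_Lp_mul_Lq_tsum_of_nonneg
    Real.HolderConjugate.two_two (f := fun i => |f i|) (g := fun i => |g i|)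
    (fun _ => abs_nonneg _) (fun _ => abs_nonneg _) (by rw [hrpow]; exact hf)
    (by rw [hrpow]; exact hg)
  simp only [hrpow, ← Real.sqrt_eq_rpow] at hle
  have habs : Summable fun i => ‖f i * g i‖ := by simpa [abs_mul] using hsum
  calc |∑' i, f i * g i| ≤ ∑' i, ‖f i * g i‖ := norm_tsum_le_tsum_norm habs
    _ = ∑' i, |f i| * |g i| := by simp only [Real.norm_eq_abs, abs_mul]
    _ ≤ _ := hle

theorem summable_and_tsum_ite_natAbs_le {c : ℝ} (hc : 0 ≤ c) (k : ℕ) :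
    Summable (fun ps : ℤ × Bool => if ps.1.natAbs ≤ k then c else 0) ∧
      ∑' ps : ℤ × Bool, (if ps.1.natAbs ≤ k then c else 0) ≤ 4 * ((k + 1) * c) := by
  set S : Finset (ℤ × Bool) := Finset.Icc (-(k : ℤ)) k ×ˢ Finset.univ
  have hS (ps : ℤ × Bool) : ps ∈ S ↔ ps.1.natAbs ≤ k := by
    simp only [S, Finset.mem_product, Finset.mem_Icc, Finset.mem_univ, and_true]
    omega
  have hzero (ps : ℤ × Bool) (hps : ps ∉ S) : (if ps.1.natAbs ≤ k then c else 0) = 0 :=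
    if_neg ((hS ps).not.mp hps)
  refine ⟨summable_of_ne_finset_zero hzero, ?_⟩
  have hcard : (S.card : ℝ) = 4 * k + 2 := by
    have hIcc : ((k : ℤ) + 1 - -k).toNat = 2 * k + 1 := by omega
    simp only [S, Finset.card_product, Int.card_Icc, Finset.card_univ, Fintype.card_bool, hIcc]
    push_cast
    ring
  calc ∑' ps : ℤ × Bool, (if ps.1.natAbs ≤ k then c else 0)
      = ∑ ps ∈ S, c := by
        rw [tsum_eq_sum hzero]
        exact Finset.sum_congr rfl fun ps hps => if_pos ((hS ps).mp hps)
    _ = (4 * k + 2) * c := by rw [Finset.sum_const, nsmul_eq_mul, hcard]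
    _ ≤ 4 * ((k + 1) * c) := by nlinarith

theorem summable_and_tsum_natAbs_add_le {G : ℕ → ℝ} (hG : ∀ k, 0 ≤ G k)
    (hs : Summable fun k : ℕ => (k + 1) * G k) :
    Summable (fun z : ℤ × ℤ => G (z.1.natAbs + z.2.natAbs)) ∧
      ∑' z : ℤ × ℤ, G (z.1.natAbs + z.2.natAbs) ≤ 4 * ∑' k : ℕ, (k + 1) * G k := by
  set T : ℕ × ℤ × Bool → ℝ := fun q => if q.2.1.natAbs ≤ q.1 then G q.1 else 0
  set σ : ℤ × ℤ → ℕ × ℤ × Bool := fun z => (z.1.natAbs + z.2.natAbs, z.1, decide (0 ≤ z.2))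
  -- `σ` is injective: the ℓ¹-norm, the first coordinate and the sign of the second determine `z`
  have hσ : Function.Injective σ := by
    rintro ⟨m, n⟩ ⟨m', n'⟩ h
    simp only [σ, Prod.mk.injEq, decide_eq_decide] at h
    ext <;> omega
  have hT (q : ℕ × ℤ × Bool) : 0 ≤ T q := by
    simp only [T]
    split_ifs
    exacts [hG _, le_rfl]
  have hslice (k : ℕ) := summable_and_tsum_ite_natAbs_le (hG k) k
  have hsSlices : Summable fun k : ℕ => ∑' ps : ℤ × Bool, T (k, ps) :=
    .of_nonneg_of_le (fun k => tsum_nonneg fun _ => hT _) (fun k => (hslice k).2) (hs.mul_left 4)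
  have hsT : Summable T := (summable_prod_of_nonneg hT).mpr ⟨fun k => (hslice k).1, hsSlices⟩
  have hGσ : (fun z : ℤ × ℤ => G (z.1.natAbs + z.2.natAbs)) = T ∘ σ := by
    funext z
    simp [T, σ]
  rw [hGσ]
  refine ⟨hsT.comp_injective hσ, ?_⟩
  calc ∑' z, (T ∘ σ) z ≤ ∑' q, T q :=
        Summable.tsum_le_tsum_of_inj σ hσ (fun q _ => hT q) (fun _ => le_rfl)
          (hsT.comp_injective hσ) hsT
    _ = ∑' k : ℕ, ∑' ps : ℤ × Bool, T (k, ps) := hsT.tsum_prod' fun k => (hslice k).1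
    _ ≤ ∑' k : ℕ, 4 * ((k + 1) * G k) :=
        Summable.tsum_le_tsum (fun k => (hslice k).2) hsSlices (hs.mul_left 4)
    _ = 4 * ∑' k : ℕ, (k + 1) * G k := tsum_mul_left

theorem abs_add_abs_le_two_mul_and_le_abs_add_abs {u v d : ℝ} (hd : 0 ≤ d)
    (h : d ^ 2 = u ^ 2 + u * v + v ^ 2) : |u| + |v| ≤ 2 * d ∧ d ≤ |u| + |v| := by
  have huv : |u * v| = |u| * |v| := abs_mul u v
  have hlow := neg_abs_le (u * v)
  have hupp := le_abs_self (u * v)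
  constructor
  · nlinarith [sq_abs u, sq_abs v, sq_nonneg (|u| - |v|), abs_nonneg u, abs_nonneg v]
  · nlinarith [sq_abs u, sq_abs v, abs_nonneg u, abs_nonneg v]

def tailWeight (x : E2) (r : ℝ) (a : E2) : ℝ :=
  if r ≤ ‖a - x‖ then ((1 + ‖a - x‖) ^ 6)⁻¹ else 0

theorem tailWeight_nonneg (x : E2) (r : ℝ) (a : E2) : 0 ≤ tailWeight x r a := by
  unfold tailWeight
  split_ifs <;> positivity

namespace TriLat

def point (z : ℤ × ℤ) : E2 := (3 : ℝ)⁻¹ • (la1 + la2) + (z.1 : ℝ) • la1 + (z.2 : ℝ) • la2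

theorem mem_iff_exists_point {x : E2} : x ∈ TriLat ↔ ∃ z : ℤ × ℤ, x = point z := by
  simp only [TriLat, point, Set.mem_ofPred_eq, Int.cast_smul_eq_zsmul, Prod.exists]

theorem norm_smul_la1_add_smul_la2_sq (a b : ℝ) :
    ‖a • la1 + b • la2‖ ^ 2 = a ^ 2 + a * b + b ^ 2 := by
  have h3 : Real.sqrt 3 ^ 2 = 3 := Real.sq_sqrt (by norm_num)
  rw [EuclideanSpace.norm_sq_eq, Fin.sum_univ_two]
  simp only [la1, la2, PiLp.add_apply, PiLp.smul_apply, smul_eq_mul, Matrix.cons_val_zero,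
    Matrix.cons_val_one, Matrix.cons_val_fin_one, Real.norm_eq_abs, sq_abs]
  nlinarith [h3]

theorem point_sub_point (z w : ℤ × ℤ) :
    point w - point z = ((w.1 - z.1 : ℤ) : ℝ) • la1 + ((w.2 - z.2 : ℤ) : ℝ) • la2 := by
  simp only [point]
  push_cast
  module

theorem exists_smul_la1_add_smul_la2_eq (y : E2) : ∃ α β : ℝ, y = α • la1 + β • la2 := by
  have h3 : Real.sqrt 3 ≠ 0 := by positivity
  refine ⟨y 0 - y 1 / Real.sqrt 3, 2 * y 1 / Real.sqrt 3, ?_⟩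
  ext i
  fin_cases i <;>
    simp only [la1, la2, PiLp.add_apply, PiLp.smul_apply, smul_eq_mul, Fin.zero_eta, Fin.mk_one,
      Matrix.cons_val_zero, Matrix.cons_val_one, Matrix.cons_val_fin_one] <;>
    field_simp <;>
    ring

theorem exists_natAbs_add_natAbs_le_and_norm_sub_le (x : E2) : ∃ c : ℤ × ℤ, ∀ z : ℤ × ℤ,
    ((z - c).1.natAbs + (z - c).2.natAbs : ℝ) ≤ 2 * ‖point z - x‖ + 1 ∧
      ‖point z - x‖ ≤ (z - c).1.natAbs + (z - c).2.natAbs + 1 := by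
  obtain ⟨α, β, hx⟩ := exists_smul_la1_add_smul_la2_eq (x - point 0)
  refine ⟨(round α, round β), fun z => ?_⟩
  have hsub : point z - x = ((z.1 : ℝ) - α) • la1 + ((z.2 : ℝ) - β) • la2 := by
    rw [← sub_sub_sub_cancel_right _ _ (point 0), hx]
    simp only [point, Prod.fst_zero, Prod.snd_zero, Int.cast_zero]
    module
  obtain ⟨hlow, hupp⟩ := abs_add_abs_le_two_mul_and_le_abs_add_abs
    (u := (z.1 : ℝ) - α) (v := (z.2 : ℝ) - β) (norm_nonneg (point z - x))
    (by rw [hsub, norm_smul_la1_add_smul_la2_sq])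
  have hround (m : ℤ) (a : ℝ) : abs (((m - round a).natAbs : ℝ) - |m - a|) ≤ 1 / 2 := by
    rw [Nat.cast_natAbs, Int.cast_abs, Int.cast_sub]
    refine (abs_abs_sub_abs_le_abs_sub _ _).trans ?_
    rw [sub_sub_sub_cancel_left]
    exact abs_sub_round a
  have h1 := abs_le.mp (hround z.1 α)
  have h2 := abs_le.mp (hround z.2 β)
  simp only [Prod.fst_sub, Prod.snd_sub]
  constructor <;> linarith

theorem exists_point_of_mem_bonds {b : E2 × E2} (hb : b ∈ Bonds) :
    ∃ z : ℤ × ℤ, ∃ e ∈ Set.Icc (-1 : ℤ × ℤ) 1, b.1 = point z ∧ b.2 = point (z + e) := by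
  obtain ⟨h1, h2, hnorm⟩ := hb
  obtain ⟨z, hz⟩ := mem_iff_exists_point.mp h1
  obtain ⟨w, hw⟩ := mem_iff_exists_point.mp h2
  have hsq : ((w.1 - z.1) ^ 2 + (w.1 - z.1) * (w.2 - z.2) + (w.2 - z.2) ^ 2 : ℤ) = 1 := by
    have := congrArg (· ^ 2) hnorm
    simp only [hz, hw, point_sub_point, norm_smul_la1_add_smul_la2_sq, one_pow] at this
    exact_mod_cast this
  refine ⟨z, w - z, ?_, hz, by rw [add_sub_cancel, hw]⟩
  simp only [Set.mem_Icc, Prod.le_def, Prod.fst_sub, Prod.snd_sub, Prod.fst_neg, Prod.snd_neg,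
    Prod.fst_one, Prod.snd_one]
  refine ⟨⟨?_, ?_⟩, ?_, ?_⟩ <;>
    nlinarith [sq_nonneg (w.1 - z.1 + 2 * (w.2 - z.2)), sq_nonneg (2 * (w.1 - z.1) + (w.2 - z.2))]

theorem summable_and_tsum_tailWeight_point_le (x : E2) {r : ℝ} (hr : 0 < r) :
    Summable (fun z => tailWeight x r (point z)) ∧
      ∑' z, tailWeight x r (point z) ≤ 1024 / r ^ 4 := by
  obtain ⟨c, hc⟩ := exists_natAbs_add_natAbs_le_and_norm_sub_le x
  set G : ℕ → ℝ := fun k => if r ≤ k + 1 then (((k : ℝ) + 1) ^ 6)⁻¹ else 0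
  have hG (k : ℕ) : 0 ≤ G k := by simp only [G]; split_ifs <;> positivity
  have hGtail : (fun k : ℕ => (k + 1) * G k) =
      fun k : ℕ => if r ≤ k + 1 then (((k : ℝ) + 1) ^ 5)⁻¹ else 0 := by
    funext k
    simp only [G]
    split_ifs
    · field_simp
    · rw [mul_zero]
  obtain ⟨hs5, h5⟩ := summable_and_tsum_tail_inv_pow_five_le hr
  rw [← hGtail] at hs5 h5
  obtain ⟨hsG, hGle⟩ := summable_and_tsum_natAbs_add_le hG hs5
  set k : ℤ × ℤ → ℕ := fun z => z.1.natAbs + z.2.natAbs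
  have hpoint (z : ℤ × ℤ) : tailWeight x r (point z) ≤ 64 * G (k (z - c)) := by
    obtain ⟨hlow, hupp⟩ := hc z
    simp only [tailWeight, G, k]
    push_cast
    split_ifs with hrd hrk hrk
    · calc ((1 + ‖point z - x‖) ^ 6)⁻¹
          ≤ (((((z - c).1.natAbs : ℝ) + (z - c).2.natAbs + 1) / 2) ^ 6)⁻¹ :=
            inv_anti₀ (by positivity) (by gcongr; linarith)
        _ = 64 * ((((z - c).1.natAbs : ℝ) + (z - c).2.natAbs + 1) ^ 6)⁻¹ := by
            rw [div_pow, inv_div]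
            ring
    · exact absurd (hrd.trans hupp) hrk
    · positivity
    · positivity
  have hshift : Summable fun z => G (k (z - c)) := (Equiv.subRight c).summable_iff.mpr hsG
  obtain ⟨hsum, hle⟩ := summable_and_tsum_le_of_nonneg_of_le
    (fun z => tailWeight_nonneg x r (point z)) hpoint (hshift.mul_left 64)
  refine ⟨hsum, hle.trans ?_⟩
  rw [tsum_mul_left, show ∑' z, G (k (z - c)) = ∑' z, G (k z) from
    (Equiv.subRight c).tsum_eq fun z => G (k z)]
  calc 64 * ∑' z, G (k z) ≤ 64 * (4 * (4 / r ^ 4)) := by gcongr; exact hGle.trans (by gcongr)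
    _ = 1024 / r ^ 4 := by ring

end TriLat

theorem summable_and_tsum_tailWeight_bonds_le (x : E2) {r : ℝ} (hr : 0 < r) :
    Summable (fun b : Bonds => tailWeight x r (b : E2 × E2).1) ∧
      ∑' b : Bonds, tailWeight x r (b : E2 × E2).1 ≤ 9216 / r ^ 4 := by
  choose z e he hz1 hz2 using fun b : Bonds => TriLat.exists_point_of_mem_bonds b.2
  have hinj :
      Function.Injective fun b : Bonds => (z b, (⟨e b, he b⟩ : Set.Icc (-1 : ℤ × ℤ) 1)) := by
    intro b b' h
    simp only [Prod.mk.injEq, Subtype.mk.injEq] at h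
    exact Subtype.ext (Prod.ext (by rw [hz1, hz1, h.1]) (by rw [hz2, hz2, h.1, h.2]))
  obtain ⟨hs, hle⟩ := TriLat.summable_and_tsum_tailWeight_point_le x hr
  obtain ⟨hsb, hleb⟩ := summable_and_tsum_comp_fst_le_of_injective hinj
    (fun _ => tailWeight_nonneg x r _) hs
  have hcard : Fintype.card (Set.Icc (-1 : ℤ × ℤ) 1) = 9 := rfl
  simp only [hcard, ← hz1] at hsb hleb
  refine ⟨hsb, hleb.trans ?_⟩
  calc ((9 : ℕ) : ℝ) * ∑' z, tailWeight x r (TriLat.point z) ≤ 9 * (1024 / r ^ 4) := by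
        push_cast; gcongr
    _ = 9216 / r ^ 4 := by ring

theorem sq_le_mul_sum_tailWeight {N : ℕ} (x : Fin N → E2) {K r y : ℝ} {a : E2}
    (hy : |y| ≤ K * ∑ i, (1 + ‖a - x i‖)⁻¹ ^ 3) (ha : ∀ i, r ≤ ‖a - x i‖) :
    y ^ 2 ≤ K ^ 2 * N * ∑ i, tailWeight (x i) r a := by
  have hCS := sq_sum_le_card_mul_sum_sq (s := Finset.univ) (f := fun i => (1 + ‖a - x i‖)⁻¹ ^ 3)
  rw [Finset.card_univ, Fintype.card_fin] at hCS
  calc y ^ 2 = |y| ^ 2 := (sq_abs y).symm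
    _ ≤ (K * ∑ i, (1 + ‖a - x i‖)⁻¹ ^ 3) ^ 2 := pow_le_pow_left₀ (abs_nonneg y) hy 2
    _ = K ^ 2 * (∑ i, (1 + ‖a - x i‖)⁻¹ ^ 3) ^ 2 := mul_pow _ _ 2
    _ ≤ K ^ 2 * (N * ∑ i, ((1 + ‖a - x i‖)⁻¹ ^ 3) ^ 2) := by gcongr
    _ = K ^ 2 * N * ∑ i, tailWeight (x i) r a := by
        simp only [tailWeight, ha, if_true, ← pow_mul, inv_pow]
        ring

theorem summable_and_tsum_le_of_le_mul_sum_tailWeight {N : ℕ} (x : Fin N → E2) {r c : ℝ}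
    (hr : 0 < r) (hc : 0 ≤ c) {F : Bonds → ℝ} (hF0 : ∀ b, 0 ≤ F b)
    (hF : ∀ b, F b ≤ c * ∑ i, tailWeight (x i) r (b : E2 × E2).1) :
    Summable F ∧ ∑' b, F b ≤ c * (N * (9216 / r ^ 4)) := by
  have hW i := summable_and_tsum_tailWeight_bonds_le (x i) hr
  obtain ⟨hsF, hleF⟩ := summable_and_tsum_le_of_nonneg_of_le hF0 hF
    ((summable_sum fun i _ => (hW i).1).mul_left c)
  refine ⟨hsF, hleF.trans ?_⟩
  rw [tsum_mul_left, Summable.tsum_finsetSum fun i _ => (hW i).1]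
  gcongr
  calc ∑ i, ∑' b : Bonds, tailWeight (x i) r (b : E2 × E2).1 ≤ ∑ _i : Fin N, 9216 / r ^ 4 :=
        Finset.sum_le_sum fun i _ => (hW i).2
    _ = N * (9216 / r ^ 4) := by simp

/-- Residual decay estimate away from the cores: if |g_b| ≤ K Σᵢ (1+dist(b,xᵢ))⁻³ and Dv
is supported on bonds at distance ≥ r from every xᵢ, then
|Σ_b g_b Dv_b| ≤ C K N r⁻² ‖Dv‖_{ℓ²}. -/
theorem stmt17 :
    ∃ C : ℝ, 0 < C ∧
      ∀ (K : ℝ), 0 ≤ K → ∀ (N : ℕ) (x : Fin N → E2) (g : E2 × E2 → ℝ) (v : E2 → ℝ) (r : ℝ),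
      1 ≤ r →
      (∀ b ∈ Bonds, |g b| ≤ K * ∑ i : Fin N, (1 + ‖b.1 - x i‖)⁻¹ ^ 3) →
      (∀ b ∈ Bonds, v b.2 - v b.1 ≠ 0 → ∀ i : Fin N, r ≤ ‖b.1 - x i‖) →
      Summable (fun b : Bonds => (v (b : E2 × E2).2 - v (b : E2 × E2).1) ^ 2) →
      |∑' b : Bonds, g (b : E2 × E2) * (v (b : E2 × E2).2 - v (b : E2 × E2).1)| ≤
        C * K * N / r ^ 2 *
          Real.sqrt (∑' b : Bonds, (v (b : E2 × E2).2 - v (b : E2 × E2).1) ^ 2) := by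
  refine ⟨96, by norm_num, fun K hK N x g v r hr hg hsupp hDv => ?_⟩
  set Dv : Bonds → ℝ := fun b => v (b : E2 × E2).2 - v (b : E2 × E2).1
  -- the decay bound on `g` is only available on the support of `Dv`
  set h : Bonds → ℝ := fun b => if Dv b = 0 then 0 else g b
  have hgh (b : Bonds) : g b * Dv b = h b * Dv b := by by_cases hb : Dv b = 0 <;> simp [h, hb]
  have hh (b : Bonds) : h b ^ 2 ≤ K ^ 2 * N * ∑ i, tailWeight (x i) r (b : E2 × E2).1 := by
    by_cases hb : Dv b = 0
    · rw [show h b = 0 from if_pos hb, zero_pow two_ne_zero]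
      exact mul_nonneg (by positivity) (Finset.sum_nonneg fun i _ => tailWeight_nonneg _ _ _)
    · simpa [h, hb] using sq_le_mul_sum_tailWeight x (hg b b.2) (hsupp b b.2 hb)
  obtain ⟨hsh, hleh⟩ := summable_and_tsum_le_of_le_mul_sum_tailWeight x (by linarith)
    (by positivity) (fun b => sq_nonneg (h b)) hh
  have hsqrt : Real.sqrt (∑' b, h b ^ 2) ≤ 96 * K * N / r ^ 2 := by
    rw [Real.sqrt_le_left (by positivity)]
    exact hleh.trans_eq (by ring)
  calc |∑' b : Bonds, g b * Dv b| = |∑' b, h b * Dv b| := by simp_rw [hgh]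
    _ ≤ Real.sqrt (∑' b, h b ^ 2) * Real.sqrt (∑' b, Dv b ^ 2) :=
        abs_tsum_mul_le_sqrt_mul_sqrt hsh hDv
    _ ≤ 96 * K * N / r ^ 2 * Real.sqrt (∑' b, Dv b ^ 2) := by gcongr
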